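/- For Borchardt's map M and positive reals c₁,…,c₄, for each permutation (i,j,k,l) ∈ {(1,2,3,4),(1,3,2,4),(1,4,2,3)} one has Mᵢ(c)Mⱼ(c) − M_k(c)M_l(c) = (1/8)(√(c_i c_j) − √(c_k c_l))(c_i + c_j − c_k − c_l). -/
import Mathlib


noncomputable def M (u : ℝ × ℝ × ℝ × ℝ) : ℝ × ℝ × ℝ × ℝ :=
  ((u.1 + u.2.1 + u.2.2.1 + u.2.2.2) / 4,
   (Real.sqrt (u.1 * u.2.1) + Real.sqrt (u.2.2.1 * u.2.2.2)) / 2,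
   (Real.sqrt (u.1 * u.2.2.1) + Real.sqrt (u.2.1 * u.2.2.2)) / 2,
   (Real.sqrt (u.1 * u.2.2.2) + Real.sqrt (u.2.1 * u.2.2.1)) / 2)

theorem stmt12 (c₁ c₂ c₃ c₄ : ℝ) (h1 : 0 < c₁) (h2 : 0 < c₂) (h3 : 0 < c₃)
    (h4 : 0 < c₄) :
    (M (c₁, c₂, c₃, c₄)).1 * (M (c₁, c₂, c₃, c₄)).2.1
        - (M (c₁, c₂, c₃, c₄)).2.2.1 * (M (c₁, c₂, c₃, c₄)).2.2.2
      = (1 / 8) * (Real.sqrt (c₁ * c₂) - Real.sqrt (c₃ * c₄)) * (c₁ + c₂ - c₃ - c₄) ∧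
    (M (c₁, c₂, c₃, c₄)).1 * (M (c₁, c₂, c₃, c₄)).2.2.1
        - (M (c₁, c₂, c₃, c₄)).2.1 * (M (c₁, c₂, c₃, c₄)).2.2.2
      = (1 / 8) * (Real.sqrt (c₁ * c₃) - Real.sqrt (c₂ * c₄)) * (c₁ + c₃ - c₂ - c₄) ∧
    (M (c₁, c₂, c₃, c₄)).1 * (M (c₁, c₂, c₃, c₄)).2.2.2
        - (M (c₁, c₂, c₃, c₄)).2.1 * (M (c₁, c₂, c₃, c₄)).2.2.1
      = (1 / 8) * (Real.sqrt (c₁ * c₄) - Real.sqrt (c₂ * c₃)) * (c₁ + c₄ - c₂ - c₃) := by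
  simp only [M]
  rw [Real.sqrt_mul h1.le, Real.sqrt_mul h1.le, Real.sqrt_mul h1.le,
      Real.sqrt_mul h2.le, Real.sqrt_mul h2.le, Real.sqrt_mul h3.le]
  set a := Real.sqrt c₁ with ha
  set b := Real.sqrt c₂ with hb
  set c := Real.sqrt c₃ with hc
  set d := Real.sqrt c₄ with hd
  have e1 : c₁ = a ^ 2 := (Real.sq_sqrt h1.le).symm
  have e2 : c₂ = b ^ 2 := (Real.sq_sqrt h2.le).symm
  have e3 : c₃ = c ^ 2 := (Real.sq_sqrt h3.le).symm
  have e4 : c₄ = d ^ 2 := (Real.sq_sqrt h4.le).symm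
  rw [e1, e2, e3, e4]
  refine ⟨by ring, by ring, by ring⟩
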